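/- Let X₁,…,Xₙ be i.i.d. from (1−ε)N(μ,1) + εQ with ε < 1/4 and Q arbitrary, and let μ̂ = Median(X₁,…,Xₙ). Then there exists a universal constant C such that for any δ ∈ (0,1) with √(log(1/δ)/n) sufficiently small, |μ̂ − μ| ≤ C·(√(log(1/δ)/n) ∨ ε) with probability at least 1 − 2δ, uniformly over μ ∈ ℝ and Q. -/

import Mathlib

/-!
The sample median exceeds `μ + t` only if at least half of the sample lies in `(μ + t, ∞)`.
Under the contaminated law this half-line has probability at most
`(1 - ε) (1/2 - min t 1 / 5) + ε`, which for `t = 10 max(s, ε)`, `s = √(log(1/δ)/n)`, falls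
below `1/2` by a margin `γ ≥ s`. Hoeffding's inequality for the number of sample points in the
half-line bounds the probability of this event by `exp(-2nγ²) ≤ δ`; the left tail is symmetric.
-/

open MeasureTheory ProbabilityTheory

noncomputable def mix {Ω : Type*} [MeasurableSpace Ω] (ε : ℝ) (P Q : Measure Ω) : Measure Ω :=
  (ENNReal.ofReal (1 - ε)) • P + (ENNReal.ofReal ε) • Q

open Real Finset

section Hoeffding

variable {ι Ω : Type*} [Fintype ι] [MeasurableSpace Ω] (ν : Measure Ω) [IsProbabilityMeasure ν]
  {A : Set Ω} [DecidablePred (· ∈ A)]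

lemma measureReal_pi_card_filter_mem_ge_le (hA : MeasurableSet A) {t : ℝ} (ht : 0 ≤ t) :
    (Measure.pi fun _ : ι => ν).real
        {x | Fintype.card ι * ν.real A + t ≤ #{i | x i ∈ A}} ≤
      exp (-2 * t ^ 2 / Fintype.card ι) := by
  set p := ν.real A
  have h_indep : iIndepFun (fun i (x : ι → Ω) => A.indicator 1 (x i) - p)
      (Measure.pi fun _ => ν) :=
    iIndepFun_pi (X := fun _ y => A.indicator 1 y - p) fun _ =>
      ((measurable_one.indicator hA).sub_const p).aemeasurable
  have h_subG : ∀ i ∈ (univ : Finset ι), HasSubgaussianMGF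
      (fun x : ι → Ω => A.indicator 1 (x i) - p) ((‖(1 : ℝ) - 0‖₊ / 2) ^ 2)
      (Measure.pi fun _ => ν) := by
    intro i _
    have h := hasSubgaussianMGF_of_mem_Icc (a := 0) (b := 1) (μ := Measure.pi fun _ => ν)
      (X := fun x => A.indicator 1 (x i))
      ((measurable_one.indicator hA).comp (measurable_pi_apply i)).aemeasurable
      (ae_of_all _ fun x => by by_cases hx : x i ∈ A <;> simp [hx])
    rwa [integral_comp_eval (measurable_one.indicator hA).aestronglyMeasurable,
      integral_indicator_one hA] at h
  have h_sum (x : ι → Ω) :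
      ∑ i, (A.indicator 1 (x i) - p) = #{i | x i ∈ A} - Fintype.card ι * p := by
    simp [Finset.sum_sub_distrib, Set.indicator_apply, Finset.sum_boole]
  convert HasSubgaussianMGF.measure_sum_ge_le_of_iIndepFun h_indep h_subG ht using 2
  · ext x
    simp only [Set.mem_ofPred_eq, h_sum]
    constructor <;> intro h <;> linarith
  · simp only [neg_mul, sub_zero, nnnorm_one, one_div, inv_pow, sum_const, card_univ,
      nsmul_eq_mul, NNReal.coe_mul, NNReal.coe_natCast, NNReal.coe_inv, NNReal.coe_pow,
      NNReal.coe_ofNat]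
    ring

lemma measureReal_pi_half_le_card_filter_mem_le (hA : MeasurableSet A) {γ : ℝ} (hγ : 0 ≤ γ)
    (hνA : ν.real A ≤ 1 / 2 - γ) :
    (Measure.pi fun _ : ι => ν).real {x | (Fintype.card ι : ℝ) / 2 ≤ #{i | x i ∈ A}} ≤
      exp (-2 * Fintype.card ι * γ ^ 2) := by
  set n : ℝ := (Fintype.card ι : ℝ)
  have h_exp : -2 * (n * γ) ^ 2 / n = -2 * n * γ ^ 2 := by
    rcases eq_or_ne n 0 with hn | hn
    · simp [hn]
    · field_simp
  rw [← h_exp]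
  refine (measureReal_mono fun x hx => ?_).trans
    (measureReal_pi_card_filter_mem_ge_le ν hA (by positivity : 0 ≤ n * γ))
  simp only [Set.mem_ofPred_eq] at hx ⊢
  nlinarith [Nat.cast_nonneg (α := ℝ) (Fintype.card ι)]

end Hoeffding

lemma gaussianReal_Iio_sub_eq_Ioi_add (μ u : ℝ) (v : NNReal) :
    gaussianReal μ v (Set.Iio (μ - u)) = gaussianReal μ v (Set.Ioi (μ + u)) := by
  have h_symm : (gaussianReal μ v).map (2 * μ - ·) = gaussianReal μ v := by
    rw [gaussianReal_map_const_sub]; ring_nf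
  conv_lhs => rw [← h_symm]
  rw [Measure.map_apply (by fun_prop) measurableSet_Iio]
  congr 1
  ext x
  simp only [Set.mem_preimage, Set.mem_Iio, Set.mem_Ioi]
  constructor <;> intro h <;> linarith

lemma one_fifth_le_gaussianPDFReal {μ y : ℝ} (hy : |y - μ| ≤ 1) :
    1 / 5 ≤ gaussianPDFReal μ 1 y := by
  have h_exp : exp (-1 / 2) ≤ exp (-(y - μ) ^ 2 / 2) := by
    gcongr
    nlinarith [abs_nonneg (y - μ), sq_abs (y - μ)]
  have h_norm : sqrt (2 * π) * exp (1 / 2) < 5 := by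
    have h_sq : (sqrt (2 * π) * exp (1 / 2)) ^ 2 = 2 * π * exp 1 := by
      rw [mul_pow, sq_sqrt (by positivity), ← exp_nat_mul]; norm_num
    nlinarith [pi_lt_four, exp_one_lt_three, pi_pos, exp_pos 1, exp_pos (1 / 2),
      sqrt_nonneg (2 * π)]
  calc (1 : ℝ) / 5 ≤ (sqrt (2 * π) * exp (1 / 2))⁻¹ := by
        rw [one_div]; exact inv_anti₀ (by positivity) h_norm.le
    _ = (sqrt (2 * π))⁻¹ * exp (-1 / 2) := by
        rw [mul_inv, ← exp_neg]; norm_num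
    _ ≤ gaussianPDFReal μ 1 y := by
        rw [gaussianPDFReal_def]
        simp only [NNReal.coe_one, mul_one]
        gcongr

lemma two_fifths_mul_le_gaussianReal_Icc {μ t : ℝ} (ht0 : 0 ≤ t) (ht1 : t ≤ 1) :
    2 * t / 5 ≤ (gaussianReal μ 1).real (Set.Icc (μ - t) (μ + t)) := by
  rw [measureReal_def, gaussianReal_apply_eq_integral _ one_ne_zero,
    ENNReal.toReal_ofReal (setIntegral_nonneg measurableSet_Icc
      fun y _ => gaussianPDFReal_nonneg _ _ y)]
  calc 2 * t / 5 = ∫ _ in Set.Icc (μ - t) (μ + t), (1 / 5 : ℝ) := by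
        rw [setIntegral_const, Real.volume_real_Icc_of_le (by linarith), smul_eq_mul]; ring
    _ ≤ ∫ y in Set.Icc (μ - t) (μ + t), gaussianPDFReal μ 1 y := by
        refine setIntegral_mono_on (integrableOn_const (by simp))
          (integrable_gaussianPDFReal μ 1).integrableOn measurableSet_Icc fun y hy => ?_
        exact one_fifth_le_gaussianPDFReal
          ((abs_le.2 ⟨by linarith [hy.1], by linarith [hy.2]⟩).trans ht1)

lemma gaussianReal_real_Ioi_add_le (μ : ℝ) {t : ℝ} (ht : 0 ≤ t) :
    (gaussianReal μ 1).real (Set.Ioi (μ + t)) ≤ 1 / 2 - min t 1 / 5 := by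
  set s := min t 1
  have hs0 : 0 ≤ s := le_min ht zero_le_one
  have h_compl : (Set.Icc (μ - s) (μ + s))ᶜ = Set.Iio (μ - s) ∪ Set.Ioi (μ + s) := by
    ext y
    simp only [Set.mem_compl_iff, Set.mem_Icc, not_and_or, not_le, Set.mem_union, Set.mem_Iio,
      Set.mem_Ioi]
  have h_disj : Disjoint (Set.Iio (μ - s)) (Set.Ioi (μ + s)) :=
    Set.disjoint_left.2 fun y h1 h2 => by
      simp only [Set.mem_Iio, Set.mem_Ioi] at h1 h2; linarith
  have h_tails : 2 * (gaussianReal μ 1).real (Set.Ioi (μ + s)) =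
      1 - (gaussianReal μ 1).real (Set.Icc (μ - s) (μ + s)) := by
    rw [← probReal_compl_eq_one_sub measurableSet_Icc, h_compl,
      measureReal_union h_disj measurableSet_Ioi, measureReal_def, measureReal_def,
      gaussianReal_Iio_sub_eq_Ioi_add]
    ring
  have h_mono : (gaussianReal μ 1).real (Set.Ioi (μ + t)) ≤
      (gaussianReal μ 1).real (Set.Ioi (μ + s)) :=
    measureReal_mono (Set.Ioi_subset_Ioi (by simp [s]))
  linarith [two_fifths_mul_le_gaussianReal_Icc (μ := μ) hs0 (min_le_right t 1)]

lemma gaussianReal_real_Iio_sub_le (μ : ℝ) {t : ℝ} (ht : 0 ≤ t) :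
    (gaussianReal μ 1).real (Set.Iio (μ - t)) ≤ 1 / 2 - min t 1 / 5 := by
  rw [measureReal_def, gaussianReal_Iio_sub_eq_Ioi_add, ← measureReal_def]
  exact gaussianReal_real_Ioi_add_le μ ht

section Contamination

variable {Ω : Type*} [MeasurableSpace Ω] {ε : ℝ} (P Q : Measure Ω)

lemma isProbabilityMeasure_mix (hε0 : 0 ≤ ε) (hε1 : ε ≤ 1) [IsProbabilityMeasure P]
    [IsProbabilityMeasure Q] : IsProbabilityMeasure (mix ε P Q) := by
  constructor
  simp only [mix, Measure.coe_add, Measure.coe_smul, Pi.add_apply, Pi.smul_apply, measure_univ,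
    smul_eq_mul, mul_one]
  rw [← ENNReal.ofReal_add (by linarith) hε0]
  norm_num

lemma mix_real_le_of_le (hε0 : 0 ≤ ε) (hε1 : ε ≤ 1) [IsFiniteMeasure P] [IsProbabilityMeasure Q]
    {A : Set Ω} {b : ℝ} (hPA : P.real A ≤ 1 / 2 - b) :
    (mix ε P Q).real A ≤ 1 / 2 - ((1 - ε) * b - ε / 2) := by
  have h_mix : (mix ε P Q).real A = (1 - ε) * P.real A + ε * Q.real A := by
    simp only [mix, measureReal_def, Measure.coe_add, Measure.coe_smul, Pi.add_apply,
      Pi.smul_apply, smul_eq_mul]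
    rw [ENNReal.toReal_add (by finiteness) (by finiteness), ENNReal.toReal_mul,
      ENNReal.toReal_mul, ENNReal.toReal_ofReal (by linarith), ENNReal.toReal_ofReal hε0]
  have hQA : Q.real A ≤ 1 := measureReal_le_one
  rw [h_mix]
  nlinarith [mul_le_mul_of_nonneg_left hPA (by linarith : 0 ≤ 1 - ε)]

end Contamination

lemma measureReal_pi_lt_abs_median_sub_le {ι : Type*} [Fintype ι] (ν : Measure ℝ)
    [IsProbabilityMeasure ν] {med : (ι → ℝ) → ℝ}
    (hmed : ∀ x, (Fintype.card ι : ℝ) / 2 ≤ #{i | x i ≤ med x} ∧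
      (Fintype.card ι : ℝ) / 2 ≤ #{i | med x ≤ x i})
    {μ t γ : ℝ} (hγ : 0 ≤ γ) (h_right : ν.real (Set.Ioi (μ + t)) ≤ 1 / 2 - γ)
    (h_left : ν.real (Set.Iio (μ - t)) ≤ 1 / 2 - γ) :
    (Measure.pi fun _ : ι => ν).real {x | t < |med x - μ|} ≤
      2 * exp (-2 * Fintype.card ι * γ ^ 2) := by
  have h_incl : {x : ι → ℝ | t < |med x - μ|} ⊆
      {x | (Fintype.card ι : ℝ) / 2 ≤ #{i | x i ∈ Set.Ioi (μ + t)}} ∪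
        {x | (Fintype.card ι : ℝ) / 2 ≤ #{i | x i ∈ Set.Iio (μ - t)}} := by
    intro x (hx : t < |med x - μ|)
    rcases lt_abs.1 hx with h | h
    · refine Or.inl ((hmed x).2.trans (Nat.cast_le.2 (card_le_card fun i hi => ?_)))
      simp only [mem_filter, mem_univ, true_and, Set.mem_Ioi] at hi ⊢
      linarith
    · refine Or.inr ((hmed x).1.trans (Nat.cast_le.2 (card_le_card fun i hi => ?_)))
      simp only [mem_filter, mem_univ, true_and, Set.mem_Iio] at hi ⊢
      linarith
  calc _ ≤ _ := measureReal_mono h_incl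
    _ ≤ _ := measureReal_union_le _ _
    _ ≤ _ := add_le_add
        (measureReal_pi_half_le_card_filter_mem_le ν measurableSet_Ioi hγ h_right)
        (measureReal_pi_half_le_card_filter_mem_le ν measurableSet_Iio hγ h_left)
    _ = _ := by ring

lemma le_contamination_margin {ε s : ℝ} (hε0 : 0 ≤ ε) (hε : ε < 1 / 4) (hs0 : 0 ≤ s)
    (hs : s ≤ 1 / 40) : s ≤ (1 - ε) * (min (10 * max s ε) 1 / 5) - ε / 2 := by
  have hsM := le_max_left s ε
  have hεM := le_max_right s ε
  rcases le_total (10 * max s ε) 1 with h | h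
  · rw [min_eq_left h]; nlinarith
  · rw [min_eq_right h]; linarith

/-- robustness of the sample median under Huber contamination of `N(μ,1)`
with `ε < 1/4`: there are universal constants `C, c > 0` such that for any `δ ∈ (0,1)`
with `√(log(1/δ)/n) ≤ c`, the sample median `μ̂` (any point splitting the sample in half)
satisfies `|μ̂ - μ| ≤ C(√(log(1/δ)/n) ∨ ε)` with probability at least `1 - 2δ`,
uniformly over `μ` and `Q`. -/
theorem stmt13 :
    ∃ C > (0:ℝ), ∃ c > (0:ℝ), ∀ (n : ℕ), 0 < n → ∀ (μ ε : ℝ), 0 ≤ ε → ε < 1/4 →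
      ∀ (Q : Measure ℝ), IsProbabilityMeasure Q →
      ∀ (med : (Fin n → ℝ) → ℝ),
      (∀ x : Fin n → ℝ,
        (n : ℝ) / 2 ≤ (Finset.univ.filter (fun i => x i ≤ med x)).card ∧
        (n : ℝ) / 2 ≤ (Finset.univ.filter (fun i => med x ≤ x i)).card) →
      ∀ δ : ℝ, 0 < δ → δ < 1 → Real.sqrt (Real.log (1/δ) / n) ≤ c →
      ((Measure.pi (fun _ : Fin n => mix ε (gaussianReal μ 1) Q))
          {x | C * max (Real.sqrt (Real.log (1/δ) / n)) ε < |med x - μ|}).toReal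
        ≤ 2 * δ := by
  refine ⟨10, by norm_num, 1 / 40, by norm_num, ?_⟩
  intro n hn μ ε hε0 hε Q _ med hmed δ hδ0 hδ1 hsc
  set s := sqrt (log (1 / δ) / n)
  set t := 10 * max s ε
  set γ := (1 - ε) * (min t 1 / 5) - ε / 2
  have hsγ : s ≤ γ := le_contamination_margin hε0 hε (sqrt_nonneg _) hsc
  have hns : n * s ^ 2 = log (1 / δ) := by
    rw [sq_sqrt (div_nonneg (log_nonneg (one_le_one_div hδ0 hδ1.le)) n.cast_nonneg)]
    field_simp
  have ht : 0 ≤ t := by positivity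
  have := isProbabilityMeasure_mix (gaussianReal μ 1) Q hε0 (by linarith)
  have h_bound := measureReal_pi_lt_abs_median_sub_le (mix ε (gaussianReal μ 1) Q)
    (med := med) (by simpa using hmed) ((sqrt_nonneg _).trans hsγ)
    (mix_real_le_of_le _ _ hε0 (by linarith) (gaussianReal_real_Ioi_add_le μ ht))
    (mix_real_le_of_le _ _ hε0 (by linarith) (gaussianReal_real_Iio_sub_le μ ht))
  rw [Fintype.card_fin] at h_bound
  refine h_bound.trans ?_
  calc 2 * exp (-2 * n * γ ^ 2) ≤ 2 * exp (-(n * s ^ 2)) := by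
        gcongr
        nlinarith [mul_le_mul_of_nonneg_left (pow_le_pow_left₀ (sqrt_nonneg _) hsγ 2)
          n.cast_nonneg (α := ℝ), n.cast_nonneg (α := ℝ), sq_nonneg γ]
    _ = 2 * δ := by rw [hns, exp_neg, exp_log (by positivity)]; simp
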